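/- arXiv:2104.14253 — 3 statements merged into one kernel-verified Lean document; each statement's English description precedes it below -/
import Mathlib

section
/- For X ≥ 1, we have ∑_{n ≤ X} 1/n = log(X) + γ + θ·(2/(3X)) for some real θ with |θ| ≤ 1. -/
/-!
Write `dₙ = Hₙ - log n`. The trapezoid and midpoint bounds for `log (1 + 1/n) = ∫ₙ^{n+1} dx/x`
make `dₙ - 1/(2n)` increasing and `dₙ - 1/(2n+1)` decreasing; both tend to `γ`, whence
`1/(2n+1) ≤ dₙ - γ ≤ 1/(2n)`. For `N = ⌊X⌋` the upper bound combines with `log (X/N) ≥ 1 - N/X`,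
and the lower bound, taken at `N + 1`, with `log X ≤ log (N + 1)` and `H_{N+1} = H_N + 1/(N+1)`.
-/

open Real Filter Topology

namespace Real

lemma log_one_add_inv_le {a : ℝ} (ha : 0 < a) :
    log (1 + a⁻¹) ≤ (a⁻¹ + (a + 1)⁻¹) / 2 :=
  calc log (1 + a⁻¹) ≤ sinh (log (1 + a⁻¹)) :=
        self_le_sinh_iff.mpr (log_nonneg (by simp [ha.le]))
    _ = (1 + a⁻¹ - (1 + a⁻¹)⁻¹) / 2 := sinh_log (by positivity)
    _ = (a⁻¹ + (a + 1)⁻¹) / 2 := by field_simp; ring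

lemma two_div_le_log_one_add_inv {a : ℝ} (ha : 0 < a) :
    2 / (2 * a + 1) ≤ log (1 + a⁻¹) := by
  simpa [div_eq_mul_inv] using le_hasSum (hasSum_log_one_add_inv ha) 0 fun k _ ↦ by positivity

lemma harmonic_sub_log_sub_harmonic_succ_sub_log {n : ℕ} (hn : n ≠ 0) :
    (harmonic n - log n) - (harmonic (n + 1) - log (n + 1 : ℕ)) =
      log (1 + (n : ℝ)⁻¹) - ((n : ℝ) + 1)⁻¹ := by
  have hn' : (n : ℝ) ≠ 0 := by positivity
  rw [show 1 + (n : ℝ)⁻¹ = (n + 1) / n by field_simp, log_div (by positivity) hn', harmonic_succ]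
  push_cast
  ring

lemma harmonic_sub_log_sub_eulerMascheroniConstant_le {n : ℕ} (hn : n ≠ 0) :
    harmonic n - log n - eulerMascheroniConstant ≤ (n : ℝ)⁻¹ / 2 := by
  let u : ℕ → ℝ := fun m ↦ harmonic (m + 1) - log (m + 1 : ℕ) - ((m + 1 : ℕ) : ℝ)⁻¹ / 2
  have hu : Monotone u := monotone_nat_of_le_succ fun m ↦ by
    have hstep := harmonic_sub_log_sub_harmonic_succ_sub_log m.add_one_ne_zero
    have hlog := log_one_add_inv_le (m.cast_add_one_pos (α := ℝ))
    simp only [u]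
    push_cast at *
    linarith
  have hlim : Tendsto u atTop (𝓝 (eulerMascheroniConstant - 0)) :=
    (tendsto_harmonic_sub_log.comp (tendsto_add_atTop_nat 1)).sub <|
      (by simpa using (tendsto_one_div_add_atTop_nhds_zero_nat (𝕜 := ℝ)).div_const 2)
  obtain ⟨m, rfl⟩ := Nat.exists_eq_succ_of_ne_zero hn
  have := hu.ge_of_tendsto hlim m
  simp only [u, sub_zero] at this
  linarith

lemma inv_two_mul_add_one_le_harmonic_sub_log_sub_eulerMascheroniConstant {n : ℕ} (hn : n ≠ 0) :
    (2 * n + 1 : ℝ)⁻¹ ≤ harmonic n - log n - eulerMascheroniConstant := by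
  let v : ℕ → ℝ := fun m ↦ harmonic (m + 1) - log (m + 1 : ℕ) - (2 * (m + 1 : ℕ) + 1 : ℝ)⁻¹
  have hv : Antitone v := antitone_nat_of_succ_le fun m ↦ by
    have hstep := harmonic_sub_log_sub_harmonic_succ_sub_log m.add_one_ne_zero
    have hlog := two_div_le_log_one_add_inv (m.cast_add_one_pos (α := ℝ))
    have hconv :
        ((m : ℝ) + 1 + 1)⁻¹ ≤ (2 * ((m : ℝ) + 1) + 1)⁻¹ + (2 * ((m : ℝ) + 1 + 1) + 1)⁻¹ := by
      field_simp
      nlinarith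
    rw [div_eq_mul_inv] at hlog
    simp only [v]
    push_cast at *
    linarith
  have hlim : Tendsto v atTop (𝓝 (eulerMascheroniConstant - 0)) :=
    (tendsto_harmonic_sub_log.comp (tendsto_add_atTop_nat 1)).sub <|
      (tendsto_atTop_mono (fun m ↦ by push_cast; linarith)
        tendsto_natCast_atTop_atTop).inv_tendsto_atTop
  obtain ⟨m, rfl⟩ := Nat.exists_eq_succ_of_ne_zero hn
  have := hv.le_of_tendsto hlim m
  simp only [v, sub_zero] at this
  linarith

lemma harmonic_floor_sub_log_sub_eulerMascheroniConstant_le {X : ℝ} (hX : 1 ≤ X) :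
    harmonic ⌊X⌋₊ - log X - eulerMascheroniConstant ≤ X⁻¹ / 2 := by
  set N := ⌊X⌋₊
  have hN : N ≠ 0 := (Nat.floor_pos.mpr hX).ne'
  have hN1 : (1 : ℝ) ≤ N := by exact_mod_cast Nat.one_le_iff_ne_zero.mpr hN
  have hNX : (N : ℝ) ≤ X := Nat.floor_le (by linarith)
  have hlog : 1 - N / X ≤ log X - log N := by
    have := log_le_sub_one_of_pos (show 0 < (N : ℝ) / X by positivity)
    rw [log_div (by positivity) (by positivity)] at this
    linarith
  have hfrac : (N : ℝ)⁻¹ / 2 - (1 - N / X) ≤ X⁻¹ / 2 := by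
    rw [← sub_nonneg]
    have : X⁻¹ / 2 - ((N : ℝ)⁻¹ / 2 - (1 - N / X)) = (2 * N - 1) * (X - N) / (2 * N * X) := by
      field_simp
      ring
    rw [this]
    exact div_nonneg (mul_nonneg (by linarith) (sub_nonneg.2 hNX)) (by positivity)
  linarith [harmonic_sub_log_sub_eulerMascheroniConstant_le hN]

lemma neg_two_div_three_mul_le_harmonic_floor_sub_log_sub_eulerMascheroniConstant {X : ℝ}
    (hX : 0 < X) : -(2 / (3 * X)) ≤ harmonic ⌊X⌋₊ - log X - eulerMascheroniConstant := by
  set N := ⌊X⌋₊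
  have hXN : X < N + 1 := Nat.lt_floor_add_one X
  have hlog : log X ≤ log (N + 1) := log_le_log hX hXN.le
  have hsucc : (harmonic (N + 1) : ℝ) = harmonic N + ((N : ℝ) + 1)⁻¹ := by
    rw [harmonic_succ]
    push_cast
    ring
  have hd := inv_two_mul_add_one_le_harmonic_sub_log_sub_eulerMascheroniConstant N.add_one_ne_zero
  have hfrac : ((N : ℝ) + 1)⁻¹ - (2 * ((N : ℝ) + 1) + 1)⁻¹ ≤ 2 / (3 * X) :=
    calc ((N : ℝ) + 1)⁻¹ - (2 * ((N : ℝ) + 1) + 1)⁻¹ ≤ 2 / (3 * ((N : ℝ) + 1)) := by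
          rw [← sub_nonneg]
          have : 2 / (3 * ((N : ℝ) + 1)) - (((N : ℝ) + 1)⁻¹ - (2 * ((N : ℝ) + 1) + 1)⁻¹) =
              N / (3 * ((N : ℝ) + 1) * (2 * N + 3)) := by
            field_simp
            ring
          rw [this]
          positivity
      _ ≤ 2 / (3 * X) := by gcongr
  push_cast at hd
  linarith

lemma abs_harmonic_floor_sub_log_sub_eulerMascheroniConstant_le {X : ℝ} (hX : 1 ≤ X) :
    |harmonic ⌊X⌋₊ - log X - eulerMascheroniConstant| ≤ 2 / (3 * X) := by
  have hX0 : 0 < X := by linarith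
  refine abs_le.2
    ⟨neg_two_div_three_mul_le_harmonic_floor_sub_log_sub_eulerMascheroniConstant hX0, ?_⟩
  calc _ ≤ X⁻¹ / 2 := harmonic_floor_sub_log_sub_eulerMascheroniConstant_le hX
    _ ≤ 2 / (3 * X) := by
      field_simp
      norm_num

end Real

theorem sum_inv_eq_log_add_gamma (X : ℝ) (hX : 1 ≤ X) :
    ∃ θ : ℝ, |θ| ≤ 1 ∧
      ∑ n ∈ Finset.Icc 1 ⌊X⌋₊, (1 : ℝ) / n =
        Real.log X + Real.eulerMascheroniConstant + θ * (2 / (3 * X)) := by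
  have hc : 0 < 2 / (3 * X) := by positivity
  refine ⟨(harmonic ⌊X⌋₊ - log X - eulerMascheroniConstant) / (2 / (3 * X)), ?_, ?_⟩
  · rw [abs_div, abs_of_pos hc, div_le_one hc]
    exact abs_harmonic_floor_sub_log_sub_eulerMascheroniConstant_le hX
  · rw [div_mul_cancel₀ _ hc.ne', harmonic_eq_sum_Icc]
    push_cast
    simp only [one_div]
    ring
end

section
/- For X ≥ 1, we have ∑_{n ≤ X} d(n) = X log(X) + (2γ - 1)X + θ·(16/3)·√X for some real θ with |θ| ≤ 1. -/
/-!
Dirichlet's hyperbola method: counting the lattice points (a, b) with ab ≤ N = ⌊X⌋ once from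
each axis gives ∑_{n ≤ X} d(n) = 2 ∑_{a ≤ D} ⌊X / a⌋ - D² with D = ⌊√X⌋. Dropping the floors costs
at most D, and γ + log D < H_D < γ + log (D + 1) for the harmonic number H_D; since
D ≤ √X < D + 1, the resulting main term differs from X log X + (2γ - 1) X by at most 5 √X.
-/

open Finset Real

lemma Nat.Ioc_filter_mul_le {a : ℕ} (ha : 0 < a) (N : ℕ) :
    {b ∈ Ioc 0 N | a * b ≤ N} = Ioc 0 (N / a) := by
  ext b
  simp only [mem_filter, mem_Ioc, mul_comm a, ← Nat.le_div_iff_mul_le ha]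
  have := Nat.div_le_self N a
  omega

section Hyperbola

variable {M : Type*} [AddCommMonoid M] (F : ℕ → ℕ → M) (N : ℕ)

lemma sum_filter_mul_le_of_left {s : Finset ℕ} (hs : 0 ∉ s) :
    ∑ x ∈ s ×ˢ Ioc 0 N with x.1 * x.2 ≤ N, F x.1 x.2 =
      ∑ a ∈ s, ∑ b ∈ Ioc 0 (N / a), F a b := by
  rw [sum_filter, sum_product]
  refine sum_congr rfl fun a ha => ?_
  rw [← sum_filter, Nat.Ioc_filter_mul_le (Nat.pos_of_ne_zero (ne_of_mem_of_not_mem ha hs))]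

lemma sum_filter_mul_le_of_right {t : Finset ℕ} (ht : 0 ∉ t) :
    ∑ x ∈ Ioc 0 N ×ˢ t with x.1 * x.2 ≤ N, F x.1 x.2 =
      ∑ b ∈ t, ∑ a ∈ Ioc 0 (N / b), F a b := by
  rw [sum_filter, sum_product_right]
  refine sum_congr rfl fun b hb => ?_
  simp_rw [mul_comm _ b]
  rw [← sum_filter, Nat.Ioc_filter_mul_le (Nat.pos_of_ne_zero (ne_of_mem_of_not_mem hb ht))]

/-- Dirichlet's hyperbola method. -/
theorem sum_filter_mul_le_add_sum_product {D E : ℕ} (hDE : D * E ≤ N)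
    (hN : N < (D + 1) * (E + 1)) :
    ∑ x ∈ Ioc 0 N ×ˢ Ioc 0 N with x.1 * x.2 ≤ N, F x.1 x.2 +
        ∑ x ∈ Ioc 0 D ×ˢ Ioc 0 E, F x.1 x.2 =
      ∑ a ∈ Ioc 0 D, ∑ b ∈ Ioc 0 (N / a), F a b + ∑ b ∈ Ioc 0 E, ∑ a ∈ Ioc 0 (N / b), F a b := by
  have hunion : {x ∈ Ioc 0 N ×ˢ Ioc 0 N | x.1 * x.2 ≤ N} =
      {x ∈ Ioc 0 D ×ˢ Ioc 0 N | x.1 * x.2 ≤ N} ∪ {x ∈ Ioc 0 N ×ˢ Ioc 0 E | x.1 * x.2 ≤ N} := by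
    ext ⟨a, b⟩
    simp only [mem_union, mem_filter, mem_product, mem_Ioc]
    constructor
    · rintro ⟨⟨⟨ha, haN⟩, hb, hbN⟩, hab⟩
      by_cases haD : a ≤ D
      · exact Or.inl ⟨⟨⟨ha, haD⟩, hb, hbN⟩, hab⟩
      · refine Or.inr ⟨⟨⟨ha, haN⟩, hb, ?_⟩, hab⟩
        by_contra hbE
        have : (D + 1) * (E + 1) ≤ a * b := Nat.mul_le_mul (by omega) (by omega)
        omega
    · rintro (⟨⟨⟨ha, -⟩, hb⟩, hab⟩ | ⟨⟨⟨ha, -⟩, hb, -⟩, hab⟩)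
      · exact ⟨⟨⟨ha, by nlinarith⟩, hb⟩, hab⟩
      · exact ⟨⟨⟨ha, by nlinarith⟩, hb, by nlinarith⟩, hab⟩
  have hinter : {x ∈ Ioc 0 D ×ˢ Ioc 0 N | x.1 * x.2 ≤ N} ∩
      {x ∈ Ioc 0 N ×ˢ Ioc 0 E | x.1 * x.2 ≤ N} = Ioc 0 D ×ˢ Ioc 0 E := by
    ext ⟨a, b⟩
    simp only [mem_inter, mem_filter, mem_product, mem_Ioc]
    constructor
    · rintro ⟨⟨⟨ha, -⟩, -⟩, ⟨-, hb⟩, -⟩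
      exact ⟨ha, hb⟩
    · rintro ⟨ha, hb⟩
      have hab : a * b ≤ N := (Nat.mul_le_mul ha.2 hb.2).trans hDE
      exact ⟨⟨⟨ha, hb.1, by nlinarith⟩, hab⟩, ⟨⟨ha.1, by nlinarith⟩, hb⟩, hab⟩
  rw [hunion, ← hinter, sum_union_inter, sum_filter_mul_le_of_left F N (by simp),
    sum_filter_mul_le_of_right F N (by simp)]

end Hyperbola

open ArithmeticFunction ArithmeticFunction.sigma in
theorem sum_Ioc_sigma_zero_add_sqrt_mul_sqrt (N : ℕ) :
    ∑ n ∈ Ioc 0 N, σ 0 n + N.sqrt * N.sqrt = 2 * ∑ n ∈ Ioc 0 N.sqrt, N / n := by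
  have h := sum_filter_mul_le_add_sum_product (fun _ _ => 1) N (Nat.sqrt_le N)
    (Nat.lt_succ_sqrt N)
  rw [sum_filter_mul_le_of_left (fun _ _ => 1) N (by simp)] at h
  simpa [sum_Ioc_sigma0_eq_sum_div, two_mul] using h

lemma eulerMascheroniConstant_add_log_lt_harmonic {n : ℕ} (hn : n ≠ 0) :
    eulerMascheroniConstant + log n < harmonic n := by
  have h := eulerMascheroniConstant_lt_eulerMascheroniSeq' n
  rw [eulerMascheroniSeq', if_neg hn] at h
  linarith

lemma harmonic_lt_eulerMascheroniConstant_add_log_succ (n : ℕ) :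
    harmonic n < eulerMascheroniConstant + log (n + 1) := by
  have h := eulerMascheroniSeq_lt_eulerMascheroniConstant n
  rw [eulerMascheroniSeq] at h
  linarith

lemma harmonic_eq_sum_Ioc_inv (n : ℕ) : (harmonic n : ℝ) = ∑ a ∈ Ioc 0 n, (a : ℝ)⁻¹ := by
  rw [harmonic_eq_sum_Icc]
  push_cast
  rfl

lemma mul_harmonic_sub_le_sum_floor_div (X : ℝ) (n : ℕ) :
    X * harmonic n - n ≤ ∑ a ∈ Ioc 0 n, (⌊X / a⌋₊ : ℝ) := by
  rw [harmonic_eq_sum_Ioc_inv, mul_sum]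
  calc ∑ a ∈ Ioc 0 n, X * (a : ℝ)⁻¹ - n = ∑ a ∈ Ioc 0 n, (X / a - 1) := by simp [div_eq_mul_inv]
    _ ≤ ∑ a ∈ Ioc 0 n, (⌊X / a⌋₊ : ℝ) := sum_le_sum fun a _ => (Nat.sub_one_lt_floor _).le

lemma sum_floor_div_le_mul_harmonic {X : ℝ} (hX : 0 ≤ X) (n : ℕ) :
    ∑ a ∈ Ioc 0 n, (⌊X / a⌋₊ : ℝ) ≤ X * harmonic n := by
  rw [harmonic_eq_sum_Ioc_inv, mul_sum]
  exact sum_le_sum fun a _ => (Nat.floor_le (by positivity)).trans_eq (div_eq_mul_inv X a)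

lemma Real.nat_floor_sqrt_eq_nat_sqrt_floor {X : ℝ} (hX : 0 ≤ X) : ⌊√X⌋₊ = Nat.sqrt ⌊X⌋₊ := by
  rw [Nat.floor_eq_iff (sqrt_nonneg X)]
  constructor
  · exact nat_sqrt_le_real_sqrt.trans (sqrt_le_sqrt (Nat.floor_le hX))
  · rw [sqrt_lt' (by positivity)]
    have : ⌊X⌋₊ + 1 ≤ (Nat.sqrt ⌊X⌋₊ + 1) ^ 2 := Nat.lt_succ_sqrt' _
    calc X < ⌊X⌋₊ + 1 := Nat.lt_floor_add_one X
      _ ≤ (Nat.sqrt ⌊X⌋₊ + 1 : ℝ) ^ 2 := by exact_mod_cast this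

lemma abs_two_mul_sub_sq_sub_main_term_le {γ X D H T : ℝ} (hD : 1 ≤ D) (hDX : D ≤ √X)
    (hXD : √X < D + 1) (hH₁ : γ + log D ≤ H) (hH₂ : H ≤ γ + log (D + 1))
    (hT₁ : X * H - D ≤ T) (hT₂ : T ≤ X * H) :
    |2 * T - D ^ 2 - (X * log X + (2 * γ - 1) * X)| ≤ 5 * √X := by
  set s := √X
  have hs : 0 < s := by linarith
  have hX : X = s ^ 2 := (sq_sqrt (sqrt_pos.1 hs).le).symm
  have hlogX : log X = 2 * log s := by rw [hX, log_pow]; norm_num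
  have hlog_succ : log (D + 1) - log s ≤ (D + 1) / s - 1 := by
    rw [← log_div (by positivity) hs.ne']
    exact log_le_sub_one_of_pos (by positivity)
  have hlog_floor : 1 - s / D ≤ log D - log s := by
    rw [← log_div (by positivity) hs.ne', ← inv_div]
    exact one_sub_inv_le_log_of_pos (by positivity)
  have hX0 : 0 ≤ X := by rw [hX]; positivity
  have hcubic : 2 * (X * (s / D)) ≤ 3 * X + 5 * s - 2 * D - D ^ 2 := by
    rw [hX, ← mul_div_assoc, ← mul_div_assoc, div_le_iff₀ (by positivity)]
    -- with s = D + t, 0 ≤ t < 1, the difference of the two sides is 3D² + 5tD - 3t²D - 2t³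
    nlinarith [mul_nonneg (sub_nonneg.2 hDX) (sub_nonneg.2 hD),
      mul_nonneg (mul_nonneg (sub_nonneg.2 hDX) (sub_nonneg.2 hDX)) (sub_nonneg.2 hXD.le)]
  rw [abs_le, hlogX]
  constructor
  · have h₁ := mul_le_mul_of_nonneg_left hH₁ hX0
    have h₂ := mul_le_mul_of_nonneg_left hlog_floor hX0
    linarith
  · have h₁ := mul_le_mul_of_nonneg_left hH₂ hX0
    have h₂ := mul_le_mul_of_nonneg_left hlog_succ hX0
    have h₃ : X * ((D + 1) / s - 1) = s * (D + 1) - X := by rw [hX]; field_simp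
    linarith [sq_nonneg (s - D)]

lemma exists_abs_le_one_eq_add_mul {a b c : ℝ} (hc : 0 < c) (h : |a - b| ≤ c) :
    ∃ θ : ℝ, |θ| ≤ 1 ∧ a = b + θ * c :=
  ⟨(a - b) / c, by rwa [abs_div, abs_of_pos hc, div_le_one hc], by field_simp; ring⟩

open ArithmeticFunction ArithmeticFunction.sigma in
theorem sum_divisor_count (X : ℝ) (hX : 1 ≤ X) :
    ∃ θ : ℝ, |θ| ≤ 1 ∧
      ∑ n ∈ Finset.Icc 1 ⌊X⌋₊, ((n.divisors.card : ℝ)) =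
        X * Real.log X + (2 * Real.eulerMascheroniConstant - 1) * X
          + θ * (16 / 3) * Real.sqrt X := by
  set D := Nat.sqrt ⌊X⌋₊
  have hD : 1 ≤ D := Nat.sqrt_pos.2 (Nat.floor_pos.2 hX)
  have hDX : (D : ℝ) ≤ √X ∧ √X < D + 1 := by
    rw [← Nat.floor_eq_iff (sqrt_nonneg X), nat_floor_sqrt_eq_nat_sqrt_floor (by positivity)]
  have hcount : ∑ n ∈ Icc 1 ⌊X⌋₊, (#n.divisors : ℝ) =
      2 * ∑ a ∈ Ioc 0 D, (⌊X / a⌋₊ : ℝ) - D ^ 2 := by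
    have h := sum_Ioc_sigma_zero_add_sqrt_mul_sqrt ⌊X⌋₊
    simp only [sigma_zero_apply, ← Nat.floor_div_natCast] at h
    rw [eq_sub_iff_add_eq, sq]
    exact_mod_cast h
  have herr := abs_two_mul_sub_sq_sub_main_term_le (by exact_mod_cast hD) hDX.1 hDX.2
    (eulerMascheroniConstant_add_log_lt_harmonic (by omega)).le
    (harmonic_lt_eulerMascheroniConstant_add_log_succ D).le
    (mul_harmonic_sub_le_sum_floor_div X D) (sum_floor_div_le_mul_harmonic (by positivity) D)
  obtain ⟨θ, hθ, h⟩ := exists_abs_le_one_eq_add_mul (c := 16 / 3 * √X) (by positivity)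
    (herr.trans (by gcongr; norm_num))
  exact ⟨θ, hθ, by rw [hcount, h]; ring⟩
end

section
/- Let 0 < σ < 1/2 and X ≥ 1. Then ∑_{n ≤ X} d_{1-2σ}(n)/n^{2-2σ} = ζ(2-2σ)·log(X) + θ·D_σ for some real θ with |θ| ≤ 1, where D_σ = 2A_σ + 1/(2-2σ) + 1/(1-2σ)² and A_σ = 4 + (1+2σ)/(σ(2-2σ)). -/
/-!
Put `s = 2 - 2σ ∈ (1, 2)`. Since `d_{s-1}(n) / n^s = ∑_{ab = n} a^{-s} b^{-1}`, exchanging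
the order of summation turns the left-hand side into `∑_k k^{-s} H(⌊X/k⌋)`, with `H` the
harmonic numbers (the terms with `k > X` vanish). From `log y ≤ H(⌊y⌋) ≤ 1 + log y` we get
`-1 ≤ log X - H(⌊X/k⌋) ≤ log k`, so `ζ(s) log X` minus the sum lies between `-ζ(s)` and
`-ζ'(s) = ∑ log k / k^s`. Comparing these series with the integrals of the decreasing
functions `t^{-s}` and `log t / t^s` gives `ζ(s) ≤ 1 + 1/(s-1)` and
`-ζ'(s) ≤ 1 + 1/(s-1)^2`, and both are at most `D_σ`.
-/

/-- The generalized sum-of-divisors function `d_a(n) = ∑_{m ∣ n} m^a`. -/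
noncomputable def da (a : ℝ) (n : ℕ) : ℝ := ∑ m ∈ n.divisors, (m : ℝ) ^ a

open Finset Real

lemma sum_range_le_sub_of_hasDerivAt {ψ g : ℝ → ℝ} {a : ℝ} (hψ : AntitoneOn ψ (Set.Ici a))
    (hg : ∀ t, a ≤ t → HasDerivAt g (-ψ t) t) (M : ℕ) :
    ∑ i ∈ range M, ψ (a + i + 1) ≤ g a - g (a + M) := by
  induction M with
  | zero => simp
  | succ M ih =>
    have hM : (0 : ℝ) ≤ M := M.cast_nonneg
    obtain ⟨c, ⟨hc₁, hc₂⟩, hslope⟩ := exists_hasDerivAt_eq_slope g (fun t ↦ -ψ t)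
      (by linarith : a + M < a + M + 1)
      (fun t ht ↦ (hg t (by linarith [ht.1])).continuousAt.continuousWithinAt)
      (fun t ht ↦ hg t (by linarith [ht.1]))
    have hψc : ψ (a + M + 1) ≤ ψ c :=
      hψ (by simp only [Set.mem_Ici]; linarith) (by simp only [Set.mem_Ici]; linarith) hc₂.le
    rw [sum_range_succ, Nat.cast_succ, ← add_assoc]
    rw [add_sub_cancel_left, div_one] at hslope
    linarith

lemma hasDerivAt_rpow_one_sub_div {s t : ℝ} (hs : s ≠ 1) (ht : 0 < t) :
    HasDerivAt (fun t ↦ t ^ (1 - s) / (s - 1)) (-(t ^ s)⁻¹) t := by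
  refine ((hasDerivAt_rpow_const (p := 1 - s) (Or.inl ht.ne')).div_const (s - 1)).congr_deriv ?_
  rw [sub_sub_cancel_left, rpow_neg ht.le]
  field_simp [sub_ne_zero.2 hs]
  ring

lemma sum_range_inv_rpow_le {s : ℝ} (hs : 1 < s) (M : ℕ) :
    ∑ n ∈ range M, ((n : ℝ) ^ s)⁻¹ ≤ 1 + 1 / (s - 1) := by
  have htail := sum_range_le_sub_of_hasDerivAt (a := 1) (g := fun t ↦ t ^ (1 - s) / (s - 1))
    (fun x hx y _ hxy ↦ inv_anti₀ (rpow_pos_of_pos (by linarith [hx.out]) s)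
      (rpow_le_rpow (by linarith [hx.out]) hxy (by linarith)))
    (fun t ht ↦ hasDerivAt_rpow_one_sub_div hs.ne' (by linarith)) M
  have hend : 0 ≤ (1 + (M : ℝ)) ^ (1 - s) / (s - 1) :=
    div_nonneg (rpow_nonneg (by positivity) _) (by linarith)
  calc ∑ n ∈ range M, ((n : ℝ) ^ s)⁻¹ ≤ ∑ n ∈ range (2 + M), ((n : ℝ) ^ s)⁻¹ :=
        sum_le_sum_of_subset_of_nonneg (range_subset_range.2 (by omega))
          (fun _ _ _ ↦ by positivity)
    _ = 1 + ∑ i ∈ range M, ((1 + i + 1 : ℝ) ^ s)⁻¹ := by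
        rw [sum_range_add, sum_range_succ, sum_range_one]
        norm_num [zero_rpow (by linarith : s ≠ 0)]
        congr! 3
        ring
    _ ≤ 1 + 1 / (s - 1) := by simp only [one_rpow] at htail; linarith

lemma one_add_mul_log_le_rpow (a : ℝ) {t : ℝ} (ht : 0 < t) : 1 + a * log t ≤ t ^ a := by
  rw [rpow_def_of_pos ht]
  linarith [add_one_le_exp (log t * a)]

lemma hasDerivAt_rpow_one_sub_mul_one_add_log {s t : ℝ} (hs : s ≠ 1) (ht : 0 < t) :
    HasDerivAt (fun t ↦ t ^ (1 - s) * (1 + (s - 1) * log t) / (s - 1) ^ 2)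
      (-(log t / t ^ s)) t := by
  have hpow := hasDerivAt_rpow_const (p := 1 - s) (Or.inl ht.ne')
  have hlog := ((hasDerivAt_log ht.ne').const_mul (s - 1)).const_add 1
  refine ((hpow.mul hlog).div_const _).congr_deriv ?_
  rw [sub_sub_cancel_left, show 1 - s = -s + 1 by ring, rpow_add ht, rpow_one, rpow_neg ht.le]
  field_simp [sub_ne_zero.2 hs]
  ring

lemma sum_range_log_div_rpow_le {s : ℝ} (hs : 1 < s) (M : ℕ) :
    ∑ n ∈ range M, log n / (n : ℝ) ^ s ≤ 1 + 1 / (s - 1) ^ 2 := by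
  set g : ℝ → ℝ := fun t ↦ t ^ (1 - s) * (1 + (s - 1) * log t) / (s - 1) ^ 2
  have hanti : AntitoneOn (fun t ↦ log t / t ^ s) (Set.Ici 3) := by
    refine (log_div_self_rpow_antitoneOn (by linarith)).mono (Set.Ici_subset_Ici.2 ?_)
    calc exp s⁻¹ ≤ exp 1 := exp_le_exp.2 (inv_le_one_of_one_le₀ hs.le)
      _ ≤ 3 := by linarith [exp_one_lt_d9]
  have htail := sum_range_le_sub_of_hasDerivAt hanti
    (fun t ht ↦ hasDerivAt_rpow_one_sub_mul_one_add_log hs.ne' (by linarith)) M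
  have hg_nonneg : 0 ≤ g (3 + M) := by
    have : 0 ≤ log (3 + M) := log_nonneg (by linarith [M.cast_nonneg (α := ℝ)])
    have : 0 < s - 1 := by linarith
    positivity
  have hg_le : g 3 ≤ 1 / (s - 1) ^ 2 := by
    have h := one_add_mul_log_le_rpow (s - 1) (t := 3) (by norm_num)
    have h3 : (3 : ℝ) ^ (1 - s) * 3 ^ (s - 1) = 1 := by
      rw [← rpow_add (by norm_num)]; norm_num
    simp only [g]
    gcongr
    nlinarith [rpow_pos_of_pos (by norm_num : (0 : ℝ) < 3) (1 - s)]
  have hhead : log 2 / 2 ^ s + log 3 / 3 ^ s ≤ 1 := by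
    have h2 : log 2 / 2 ^ s ≤ log 2 / 2 := div_le_div_of_nonneg_left (log_nonneg (by norm_num))
      (by norm_num) (self_le_rpow_of_one_le (by norm_num) hs.le)
    have h3 : log 3 / 3 ^ s ≤ log 3 / 3 := div_le_div_of_nonneg_left (log_nonneg (by norm_num))
      (by norm_num) (self_le_rpow_of_one_le (by norm_num) hs.le)
    linarith [log_two_lt_d9, log_three_lt_d9]
  calc ∑ n ∈ range M, log n / (n : ℝ) ^ s
        ≤ ∑ n ∈ range (4 + M), log n / (n : ℝ) ^ s :=
        sum_le_sum_of_subset_of_nonneg (range_subset_range.2 (by omega))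
          (fun n _ _ ↦ div_nonneg (log_natCast_nonneg n) (by positivity))
    _ = log 2 / 2 ^ s + log 3 / 3 ^ s +
          ∑ i ∈ range M, log (3 + i + 1) / (3 + i + 1 : ℝ) ^ s := by
        rw [sum_range_add]
        norm_num [sum_range_succ]
        congr! 3 <;> ring
    _ ≤ 1 + 1 / (s - 1) ^ 2 := by linarith

lemma da_sub_one_div_rpow (s : ℝ) (n : ℕ) :
    da (s - 1) n / (n : ℝ) ^ s =
      ∑ x ∈ n.divisorsAntidiagonal, ((x.1 : ℝ) ^ s)⁻¹ * (x.2 : ℝ)⁻¹ := by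
  rw [da, ← Nat.sum_divisorsAntidiagonal' (fun _ b ↦ (b : ℝ) ^ (s - 1)), sum_div]
  refine sum_congr rfl fun x hx ↦ ?_
  have ha : (0 : ℝ) < x.1 :=
    Nat.cast_pos.2 (Nat.pos_of_ne_zero (Nat.left_ne_zero_of_mem_divisorsAntidiagonal hx))
  have hb : (0 : ℝ) < x.2 :=
    Nat.cast_pos.2 (Nat.pos_of_ne_zero (Nat.right_ne_zero_of_mem_divisorsAntidiagonal hx))
  obtain ⟨rfl, -⟩ := Nat.mem_divisorsAntidiagonal.1 hx
  rw [Nat.cast_mul, mul_rpow ha.le hb.le, rpow_sub_one hb.ne']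
  have := rpow_pos_of_pos ha s
  have := rpow_pos_of_pos hb s
  field_simp

lemma sum_Icc_da_div_rpow {s : ℝ} (hs : s ≠ 0) (N : ℕ) :
    ∑ n ∈ Icc 1 N, da (s - 1) n / (n : ℝ) ^ s =
      ∑ k ∈ Icc 1 N, ((k : ℝ) ^ s)⁻¹ * (harmonic (N / k) : ℝ) := by
  let f : ArithmeticFunction ℝ := ⟨fun k ↦ ((k : ℝ) ^ s)⁻¹, by simp [zero_rpow hs]⟩
  let g : ArithmeticFunction ℝ := ⟨fun m ↦ (m : ℝ)⁻¹, by simp⟩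
  have hfg := ArithmeticFunction.sum_Ioc_mul_eq_sum_sum f g N
  simp only [ArithmeticFunction.mul_apply, ← Icc_add_one_left_eq_Ioc, zero_add] at hfg
  simp only [da_sub_one_div_rpow, harmonic_eq_sum_Icc]
  push_cast
  exact hfg

lemma log_sub_harmonic_floor_div_le {X : ℝ} (hX : 0 < X) {k : ℕ} (hk : k ≠ 0) :
    log X - harmonic ⌊X / k⌋₊ ≤ log k := by
  have hk' : (0 : ℝ) < k := by exact_mod_cast Nat.pos_of_ne_zero hk
  have h := log_le_harmonic_floor (X / k) (by positivity)
  rw [log_div hX.ne' hk'.ne'] at h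
  linarith

lemma neg_one_le_log_sub_harmonic_floor_div {X : ℝ} (hX : 1 ≤ X) (k : ℕ) :
    -1 ≤ log X - harmonic ⌊X / k⌋₊ := by
  rcases le_or_gt 1 (X / k) with hXk | hXk
  · have hk : (1 : ℝ) ≤ k := by
      by_contra! h
      rw [Nat.cast_lt_one.1 h, Nat.cast_zero, div_zero] at hXk
      linarith
    have hH := harmonic_floor_le_one_add_log (X / k) hXk
    have hlog : log (X / k) ≤ log X :=
      log_le_log (by linarith) (div_le_self (by linarith) hk)
    linarith
  · rw [Nat.floor_eq_zero.2 hXk, harmonic_zero, Rat.cast_zero]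
    linarith [log_nonneg hX]

lemma hasSum_inv_rpow_riemannZeta_re {s : ℝ} (hs : 1 < s) :
    HasSum (fun n : ℕ ↦ ((n : ℝ) ^ s)⁻¹) (riemannZeta s).re := by
  have hs' : 1 < (s : ℂ).re := by simpa using hs
  have h := Complex.hasSum_re <|
    zeta_eq_tsum_one_div_nat_cpow hs' ▸ (Complex.summable_one_div_nat_cpow.2 hs').hasSum
  convert h using 2 with n
  rw [← Complex.ofReal_natCast, ← Complex.ofReal_cpow n.cast_nonneg, one_div,
    ← Complex.ofReal_inv, Complex.ofReal_re]

lemma hasSum_inv_rpow_mul_log_sub_harmonic {s : ℝ} (hs : 1 < s) (X : ℝ) :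
    HasSum (fun k : ℕ ↦ ((k : ℝ) ^ s)⁻¹ * (log X - harmonic ⌊X / k⌋₊))
      ((riemannZeta s).re * log X - ∑ n ∈ Icc 1 ⌊X⌋₊, da (s - 1) n / (n : ℝ) ^ s) := by
  have hvanish (k : ℕ) (hk : k ∉ Icc 1 ⌊X⌋₊) :
      ((k : ℝ) ^ s)⁻¹ * harmonic ⌊X / k⌋₊ = 0 := by
    rw [Nat.floor_div_natCast, Nat.div_eq_zero_iff.2 (by simp at hk; omega), harmonic_zero,
      Rat.cast_zero, mul_zero]
  rw [sum_Icc_da_div_rpow (by linarith)]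
  simp_rw [mul_sub, ← Nat.floor_div_natCast]
  exact ((hasSum_inv_rpow_riemannZeta_re hs).mul_right (log X)).sub
    (hasSum_sum_of_ne_finset_zero hvanish)

theorem abs_sum_da_div_rpow_sub_le {s X : ℝ} (hs1 : 1 < s) (hs2 : s ≤ 2) (hX : 1 ≤ X) :
    |∑ n ∈ Icc 1 ⌊X⌋₊, da (s - 1) n / (n : ℝ) ^ s - (riemannZeta s).re * log X| ≤
      1 + 1 / (s - 1) ^ 2 := by
  set a : ℕ → ℝ := fun k ↦ ((k : ℝ) ^ s)⁻¹
  set L : ℕ → ℝ := fun k ↦ log k / (k : ℝ) ^ s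
  set e : ℕ → ℝ := fun k ↦ log X - harmonic ⌊X / k⌋₊
  have herr := hasSum_inv_rpow_mul_log_sub_harmonic hs1 X
  have ha_nonneg (k : ℕ) : 0 ≤ a k := by positivity
  have hL_nonneg (k : ℕ) : 0 ≤ L k := div_nonneg (log_natCast_nonneg k) (by positivity)
  have hupper (k : ℕ) : a k * e k ≤ L k := by
    rcases eq_or_ne k 0 with rfl | hk
    · simp [a, L, zero_rpow (by linarith : s ≠ 0)]
    · calc a k * e k ≤ a k * log k := mul_le_mul_of_nonneg_left
            (log_sub_harmonic_floor_div_le (by linarith) hk) (ha_nonneg k)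
        _ = L k := by simp only [a, L]; ring
  have hlower (k : ℕ) : -a k ≤ a k * e k := by
    simpa using mul_le_mul_of_nonneg_left (neg_one_le_log_sub_harmonic_floor_div hX k)
      (ha_nonneg k)
  have hs_sq : 1 / (s - 1) ≤ 1 / (s - 1) ^ 2 :=
    one_div_le_one_div_of_le (by nlinarith) (by nlinarith)
  rw [abs_sub_comm, ← herr.tsum_eq, abs_le]
  constructor
  · calc -(1 + 1 / (s - 1) ^ 2) ≤ -∑' k, a k := by
          linarith [Real.tsum_le_of_sum_range_le ha_nonneg (sum_range_inv_rpow_le hs1)]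
      _ = ∑' k, -a k := tsum_neg.symm
      _ ≤ ∑' k, a k * e k :=
          (Real.summable_nat_rpow_inv.2 hs1).neg.tsum_le_tsum hlower herr.summable
  · calc ∑' k, a k * e k ≤ ∑' k, L k := herr.summable.tsum_le_tsum hupper
          (summable_of_sum_range_le hL_nonneg (sum_range_log_div_rpow_le hs1))
      _ ≤ 1 + 1 / (s - 1) ^ 2 :=
          Real.tsum_le_of_sum_range_le hL_nonneg (sum_range_log_div_rpow_le hs1)

lemma exists_eq_add_mul_of_abs_sub_le {a b D : ℝ} (h : |a - b| ≤ D) :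
    ∃ θ : ℝ, |θ| ≤ 1 ∧ a = b + θ * D := by
  rcases ((abs_nonneg _).trans h).eq_or_lt with hD | hD
  · refine ⟨0, by simp, ?_⟩
    rw [← hD, abs_nonpos_iff, sub_eq_zero] at h
    simp [h]
  · refine ⟨(a - b) / D, ?_, by field_simp; ring⟩
    rw [abs_div, abs_of_pos hD]
    exact div_le_one_of_le₀ h hD.le

theorem sum_da_div (σ X : ℝ) (hσ0 : 0 < σ) (hσ1 : σ < 1 / 2) (hX : 1 ≤ X) :
    ∃ θ : ℝ, |θ| ≤ 1 ∧
      ∑ n ∈ Finset.Icc 1 ⌊X⌋₊, da (1 - 2 * σ) n / (n : ℝ) ^ (2 - 2 * σ) =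
        (riemannZeta (2 - 2 * σ)).re * Real.log X
          + θ * (2 * (4 + (1 + 2 * σ) / (σ * (2 - 2 * σ)))
            + 1 / (2 - 2 * σ) + 1 / (1 - 2 * σ) ^ 2) := by
  have hE := abs_sum_da_div_rpow_sub_le (s := 2 - 2 * σ) (by linarith) (by linarith) hX
  rw [show 2 - 2 * σ - 1 = 1 - 2 * σ by ring] at hE
  push_cast at hE
  refine exists_eq_add_mul_of_abs_sub_le (hE.trans ?_)
  have : 0 < (1 + 2 * σ) / (σ * (2 - 2 * σ)) := div_pos (by linarith) (by nlinarith)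
  have : 0 < 1 / (2 - 2 * σ) := one_div_pos.2 (by linarith)
  linarith
end
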